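/- Let n ≥ 1, let Γ be a finitely generated group and ρ : Γ → GL_n(ℝ) a linear representation, and let H denote the closure of ρ(Γ) in GL_n(ℝ). Assume there exists a finitely generated subgroup Λ ⊆ Γ such that ρ(Λ) is a cocompact lattice in H, i.e. ρ(Λ) is a discrete subgroup of H and there is a compact subset K ⊆ H with ρ(Λ)·K = H. Equip G₁ = ℝ^n ⋊_ρ Γ and G₂ = ℝ^n ⋊ H with word lengths |·|_{S₁}, |·|_{S₂} associated to compact symmetric generating sets containing the identity. Then there exists C ≥ 1 such that for every v ∈ ℝ^n: C^{-1}·|(v,1)|_{S₂} − C ≤ |(v,1)|_{S₁} ≤ C·|(v,1)|_{S₂} + C. In other words, the canonical homomorphism ℝ^n ⋊_ρ Γ → ℝ^n ⋊ H is a quasi-isometry in restriction to ℝ^n. -/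

import Mathlib

/-!
The map `ℝⁿ ⋊ Γ → ℝⁿ ⋊ H` is continuous, so it sends `S₁` into a compact set, which is absorbed by
a power of `S₂`: by Baire, some power of a compact generating set of a locally compact group has
interior points, and then the interiors of the powers form an increasing open cover. This gives
`|·|₂ ≤ k |·|₁`.

Conversely, write `H = ρ(Λ) K` with `K` compact. A word `s₁ ⋯ sₘ` in `S₂` is lifted letter by
letter: choosing `k' ∈ K` so that the `H`-component of `k' s k⁻¹` lies in `ρ(Λ)`, these twisted
letters lie in a compact set `Q` whose `H`-components meet the discrete group `ρ(Λ)` in a finite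
set, so they all lift to one compact set `E ⊆ ℝⁿ ⋊ Γ`. The product `g ∈ Eᵐ` of the lifts maps to
`k (v, 1)`; multiplying `g` by the inverse of its `Γ`-component recovers `(v, 1)` as a product of
`2m` elements of a fixed compact set, hence of boundedly many elements of `S₁` per letter.
-/

open Matrix Pointwise

noncomputable section

/-- The automorphism of `Multiplicative ℝ^n` given by a matrix in `GL_n(ℝ)`. -/
def glAut {n : ℕ} (A : GL (Fin n) ℝ) :
    MulAut (Multiplicative (Fin n → ℝ)) :=
  AddEquiv.toMultiplicative
    { toFun := fun v => (A : Matrix (Fin n) (Fin n) ℝ).mulVec v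
      invFun := fun v => ((A⁻¹ : GL (Fin n) ℝ) : Matrix (Fin n) (Fin n) ℝ).mulVec v
      left_inv := fun v => by
        show ((A⁻¹ : GL (Fin n) ℝ) : Matrix (Fin n) (Fin n) ℝ).mulVec
          ((A : Matrix (Fin n) (Fin n) ℝ).mulVec v) = v
        rw [Matrix.mulVec_mulVec, ← Units.val_mul, inv_mul_cancel, Units.val_one,
          Matrix.one_mulVec]
      right_inv := fun v => by
        show ((A : GL (Fin n) ℝ) : Matrix (Fin n) (Fin n) ℝ).mulVec
          (((A⁻¹ : GL (Fin n) ℝ) : Matrix (Fin n) (Fin n) ℝ).mulVec v) = v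
        rw [Matrix.mulVec_mulVec, ← Units.val_mul, mul_inv_cancel, Units.val_one,
          Matrix.one_mulVec]
      map_add' := fun v w => by simp [Matrix.mulVec_add] }

/-- The action of `GL_n(ℝ)` on `Multiplicative ℝ^n`, as a homomorphism to the
automorphism group. -/
def glHom {n : ℕ} : GL (Fin n) ℝ →* MulAut (Multiplicative (Fin n → ℝ)) where
  toFun := glAut
  map_one' := by
    apply DFunLike.ext
    intro v
    show ((1 : GL (Fin n) ℝ) : Matrix (Fin n) (Fin n) ℝ).mulVec v = v
    simp
    exact Matrix.one_mulVec _
  map_mul' := fun A B => by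
    apply DFunLike.ext
    intro v
    show ((A * B : GL (Fin n) ℝ) : Matrix (Fin n) (Fin n) ℝ).mulVec v
      = (A : Matrix (Fin n) (Fin n) ℝ).mulVec ((B : Matrix (Fin n) (Fin n) ℝ).mulVec v)
    simp [Matrix.mulVec_mulVec]
    exact (Matrix.mulVec_mulVec _ _ _).symm

/-- Product topology on a semidirect product. -/
instance semidirectTopology {N H : Type*} [Group N] [Group H] [TopologicalSpace N]
    [TopologicalSpace H] {φ : H →* MulAut N} : TopologicalSpace (N ⋊[φ] H) :=
  TopologicalSpace.induced (fun g => (g.left, g.right)) inferInstance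

/-- Word length with respect to a generating set `S`. -/
def wordLength {G : Type*} [Group G] (S : Set G) (g : G) : ℕ :=
  sInf {m : ℕ | g ∈ S ^ m}

open SemidirectProduct Set

section WordLength

variable {G : Type*} [Group G] {S : Set G} {g : G}

theorem wordLength_le_of_mem_pow {m : ℕ} (h : g ∈ S ^ m) : wordLength S g ≤ m :=
  Nat.sInf_le h

theorem mem_pow_wordLength (h : ∃ m : ℕ, g ∈ S ^ m) : g ∈ S ^ wordLength S g :=
  Nat.sInf_mem h

theorem wordLength_le_mul_of_subset_pow {C : Set G} {k m : ℕ} (hC : C ⊆ S ^ k)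
    (hg : g ∈ C ^ m) : wordLength S g ≤ k * m :=
  wordLength_le_of_mem_pow <| by rw [pow_mul]; exact pow_subset_pow_left hC hg

end WordLength

section CompactGeneration

variable {G : Type*} [Group G] [TopologicalSpace G] [IsTopologicalGroup G] {S : Set G}

theorem IsCompact.pow (hS : IsCompact S) : ∀ m : ℕ, IsCompact (S ^ m)
  | 0 => by simp
  | m + 1 => by rw [pow_succ]; exact (hS.pow m).mul hS

variable [LocallyCompactSpace G] [T2Space G]

theorem iUnion_interior_pow_eq_univ (hS : IsCompact S) (hgen : ∀ g : G, ∃ m : ℕ, g ∈ S ^ m) :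
    ⋃ m : ℕ, interior (S ^ m) = univ := by
  obtain ⟨m₀, u, hu⟩ := nonempty_interior_of_iUnion_of_closed
    (fun m => (hS.pow m).isClosed) (iUnion_eq_univ_iff.2 hgen)
  refine iUnion_eq_univ_iff.2 fun x => ?_
  obtain ⟨j, hj⟩ := hgen (x * u⁻¹)
  refine ⟨j + m₀, ?_⟩
  rw [pow_add]
  have := subset_interior_mul_right (mul_mem_mul hj hu)
  rwa [inv_mul_cancel_right] at this

theorem exists_subset_pow_of_isCompact (h1 : (1 : G) ∈ S) (hS : IsCompact S)
    (hgen : ∀ g : G, ∃ m : ℕ, g ∈ S ^ m) {C : Set G} (hC : IsCompact C) :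
    ∃ k : ℕ, C ⊆ S ^ k := by
  have hmono : Monotone fun m : ℕ => interior (S ^ m) := fun _ _ hab =>
    interior_mono (pow_subset_pow_right h1 hab)
  obtain ⟨k, hk⟩ := hC.elim_directed_cover _ (fun _ => isOpen_interior)
    (iUnion_interior_pow_eq_univ hS hgen ▸ subset_univ C) hmono.directed_le
  exact ⟨k, hk.trans interior_subset⟩

theorem exists_wordLength_map_le_mul {G' : Type*} [Group G'] [TopologicalSpace G'] (f : G' →* G)
    (hf : Continuous f) {S' : Set G'} (hS' : IsCompact S') (hgen' : ∀ g, ∃ m : ℕ, g ∈ S' ^ m)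
    (h1 : (1 : G) ∈ S) (hS : IsCompact S) (hgen : ∀ g : G, ∃ m : ℕ, g ∈ S ^ m) :
    ∃ k : ℕ, ∀ g, wordLength S (f g) ≤ k * wordLength S' g := by
  obtain ⟨k, hk⟩ := exists_subset_pow_of_isCompact h1 hS hgen (hS'.image hf)
  refine ⟨k, fun g => wordLength_le_mul_of_subset_pow hk ?_⟩
  rw [← image_pow]
  exact mem_image_of_mem f (mem_pow_wordLength (hgen' g))

end CompactGeneration

theorem Subgroup.finite_inter_of_isCompact {G : Type*} [Group G] [TopologicalSpace G]
    [IsTopologicalGroup G] [T2Space G] (L : Subgroup G) [DiscreteTopology L] {C : Set G}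
    (hC : IsCompact C) : ((L : Set G) ∩ C).Finite :=
  (hC.inter_left L.isClosed_of_discrete).finite <| isDiscrete_iff_discreteTopology.2 <|
    DiscreteTopology.of_subset ‹_› inter_subset_left

theorem Subgroup.exists_mul_mem_of_mul_eq_univ {G : Type*} [Group G] {L : Subgroup G}
    {K : Set G} (hLK : (L : Set G) * K = univ) (g : G) : ∃ c ∈ K, c * g ∈ L := by
  obtain ⟨a, ha, c, hc, hac⟩ : g⁻¹ ∈ (L : Set G) * K := hLK ▸ mem_univ _
  refine ⟨c, hc, ?_⟩
  have hac : a * c = g⁻¹ := hac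
  rw [show c * g = a⁻¹ by rw [← inv_inv g, ← hac]; group]
  exact L.inv_mem ha

theorem exists_mem_pow_map_eq_mul {G₁ G₂ : Type*} [Group G₁] [Group G₂] (f : G₁ →* G₂)
    {S K : Set G₂} {E : Set G₁} (hK : (1 : G₂) ∈ K)
    (hstep : ∀ s ∈ S, ∀ k ∈ K, ∃ k' ∈ K, k' * s * k⁻¹ ∈ f '' E) :
    ∀ m : ℕ, ∀ x ∈ S ^ m, ∃ k ∈ K, ∃ g ∈ E ^ m, f g = k * x
  | 0, x, hx => ⟨1, hK, 1, by simp, by simp_all⟩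
  | m + 1, _, hx => by
    rw [pow_succ'] at hx
    obtain ⟨s, hs, y, hy, rfl⟩ := hx
    obtain ⟨k, hk, g, hg, hfg⟩ := exists_mem_pow_map_eq_mul f hK hstep m y hy
    obtain ⟨k', hk', e, he, hfe⟩ := hstep s hs k hk
    refine ⟨k', hk', e * g, ?_, ?_⟩
    · rw [pow_succ']
      exact mul_mem_mul he hg
    · rw [map_mul, hfe, hfg]
      group

namespace SemidirectProduct

section Topology

variable {N K : Type*} [Group N] [Group K] [TopologicalSpace N] [TopologicalSpace K]
  {φ : K →* MulAut N}

def homeomorphProd : N ⋊[φ] K ≃ₜ N × K :=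
  equivProd.toHomeomorphOfIsInducing ⟨rfl⟩

theorem continuous_left : Continuous (left : N ⋊[φ] K → N) :=
  continuous_fst.comp homeomorphProd.continuous

theorem continuous_right : Continuous (right : N ⋊[φ] K → K) :=
  continuous_snd.comp homeomorphProd.continuous

theorem continuous_of_left_right {X : Type*} [TopologicalSpace X] {f : X → N ⋊[φ] K}
    (hl : Continuous fun x => (f x).left) (hr : Continuous fun x => (f x).right) :
    Continuous f :=
  continuous_induced_rng.2 (hl.prodMk hr)

theorem continuous_inr : Continuous (inr : K → N ⋊[φ] K) :=
  continuous_of_left_right continuous_const continuous_id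

instance [LocallyCompactSpace N] [LocallyCompactSpace K] : LocallyCompactSpace (N ⋊[φ] K) :=
  homeomorphProd.locallyCompactSpace_iff.2 inferInstance

instance [T2Space N] [T2Space K] : T2Space (N ⋊[φ] K) :=
  homeomorphProd.isEmbedding.t2Space

theorem isTopologicalGroup [IsTopologicalGroup N] [IsTopologicalGroup K]
    (hφ : Continuous fun p : K × N => φ p.1 p.2) : IsTopologicalGroup (N ⋊[φ] K) where
  continuous_mul := continuous_of_left_right
    ((continuous_left.comp continuous_fst).mul <| hφ.comp <|
      (continuous_right.comp continuous_fst).prodMk (continuous_left.comp continuous_snd))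
    ((continuous_right.comp continuous_fst).mul (continuous_right.comp continuous_snd))
  continuous_inv := continuous_of_left_right
    (hφ.comp (continuous_right.inv.prodMk continuous_left.inv)) continuous_right.inv

end Topology

variable {N Γ H : Type*} [Group N] [Group Γ] [Group H] {φ : H →* MulAut N}

def mapRight (ψ : Γ →* H) : N ⋊[φ.comp ψ] Γ →* N ⋊[φ] H :=
  map (MonoidHom.id N) ψ fun _ => rfl

@[simp]
theorem mapRight_left (ψ : Γ →* H) (g : N ⋊[φ.comp ψ] Γ) : (mapRight ψ g).left = g.left := rfl

@[simp]
theorem mapRight_right (ψ : Γ →* H) (g : N ⋊[φ.comp ψ] Γ) : (mapRight ψ g).right = ψ g.right :=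
  rfl

@[simp]
theorem mapRight_inl (ψ : Γ →* H) (v : N) : mapRight ψ (inl v : N ⋊[φ.comp ψ] Γ) = inl v :=
  map_inl _ _ _ v

theorem continuous_mapRight [TopologicalSpace N] [TopologicalSpace Γ] [TopologicalSpace H]
    [DiscreteTopology Γ] (ψ : Γ →* H) : Continuous (mapRight ψ : N ⋊[φ.comp ψ] Γ → _) :=
  continuous_of_left_right continuous_left
    ((continuous_of_discreteTopology (f := ψ)).comp continuous_right)

theorem inv_inr_right_mul_eq_inl {ψ : Γ →* H} {g : N ⋊[φ.comp ψ] Γ} {k : H} {v : N}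
    (hg : mapRight ψ g = inr k * inl v) : (inr g.right)⁻¹ * g = inl v := by
  have hr : ψ g.right = k := by simpa using congrArg right hg
  have hl : g.left = φ k v := by simpa using congrArg left hg
  ext
  · simp [hl, ← hr]
  · simp

end SemidirectProduct

section Cocompact

variable {N H Γ : Type*} [Group N] [Group H] [Group Γ] [TopologicalSpace N] [TopologicalSpace Γ]
  {φ : H →* MulAut N} {ψ : Γ →* H}

theorem exists_inr_mul_mul_inv_mem_image_mapRight {L : Subgroup H} {K : Set H}
    (hLK : (L : Set H) * K = univ) {S : Set (N ⋊[φ] H)} {T : Set Γ}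
    (hT : (L : Set H) ∩ right '' (inr '' K * S * (inr '' K)⁻¹) ⊆ ψ '' T) :
    ∀ s ∈ S, ∀ k ∈ inr '' K, ∃ k' ∈ inr '' K, k' * s * k⁻¹ ∈
      mapRight ψ '' (homeomorphProd ⁻¹' ((left '' (inr '' K * S * (inr '' K)⁻¹)) ×ˢ T)) := by
  rintro s hs _ ⟨k, hk, rfl⟩
  obtain ⟨c, hc, hcL⟩ := L.exists_mul_mem_of_mul_eq_univ hLK (s.right * k⁻¹)
  set z := inr c * s * (inr k)⁻¹
  have hzQ : z ∈ inr '' K * S * (inr '' K)⁻¹ :=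
    mul_mem_mul (mul_mem_mul (mem_image_of_mem _ hc) hs) (inv_mem_inv.2 (mem_image_of_mem _ hk))
  obtain ⟨γ, hγ, hγz⟩ := hT ⟨by simpa [z, mul_assoc] using hcL, mem_image_of_mem _ hzQ⟩
  exact ⟨inr c, mem_image_of_mem _ hc, ⟨z.left, γ⟩, ⟨mem_image_of_mem _ hzQ, hγ⟩,
    by ext <;> simp [z, hγz]⟩

variable [TopologicalSpace H] [DiscreteTopology Γ]

theorem exists_wordLength_inl_le_mul_of_cocompact [IsTopologicalGroup N] [IsTopologicalGroup H]
    [LocallyCompactSpace N] [T2Space N] [T2Space H] (hφ : Continuous fun p : H × N => φ p.1 p.2)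
    {Λ : Subgroup Γ} [DiscreteTopology (Λ.map ψ)] {K : Set H} (hK : IsCompact K)
    (hΛK : (Λ.map ψ : Set H) * K = univ)
    {S₁ : Set (N ⋊[φ.comp ψ] Γ)} (hS₁1 : 1 ∈ S₁) (hS₁ : IsCompact S₁)
    (hS₁gen : ∀ g, ∃ m : ℕ, g ∈ S₁ ^ m)
    {S₂ : Set (N ⋊[φ] H)} (hS₂ : IsCompact S₂) (hS₂gen : ∀ g, ∃ m : ℕ, g ∈ S₂ ^ m) :
    ∃ k : ℕ, ∀ v : N, wordLength S₁ (inl v) ≤ k * wordLength S₂ (inl v) := by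
  have := isTopologicalGroup hφ
  have : IsTopologicalGroup (N ⋊[φ.comp ψ] Γ) := isTopologicalGroup <|
    hφ.comp ((continuous_of_discreteTopology (f := ψ)).prodMap continuous_id)
  -- `1 ∈ K₁` is what starts the letter-by-letter lifting
  set K₁ := insert 1 K
  have hΛK₁ : (Λ.map ψ : Set H) * K₁ = univ :=
    eq_univ_of_univ_subset (hΛK ▸ mul_subset_mul_left (subset_insert 1 K))
  have hK₁ : IsCompact K₁ := hK.insert 1
  set Q := inr '' K₁ * S₂ * (inr '' K₁)⁻¹
  have hK₁' : IsCompact (inr '' K₁ : Set (N ⋊[φ] H)) :=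
    hK₁.image SemidirectProduct.continuous_inr
  have hQ : IsCompact Q := (hK₁'.mul hS₂).mul hK₁'.inv
  obtain ⟨T, -, hT, hTQ⟩ := exists_subset_image_finite_and.1
    ⟨_, inter_subset_left.trans (Subgroup.coe_map ψ Λ).subset,
      (Λ.map ψ).finite_inter_of_isCompact (hQ.image continuous_right), subset_rfl⟩
  set E : Set (N ⋊[φ.comp ψ] Γ) := homeomorphProd ⁻¹' ((left '' Q) ×ˢ T)
  have hE : IsCompact E :=
    homeomorphProd.isCompact_preimage.2 ((hQ.image continuous_left).prod hT.isCompact)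
  set π : N ⋊[φ.comp ψ] Γ →* N ⋊[φ.comp ψ] Γ := inr.comp rightHom
  have hπ : Continuous π := SemidirectProduct.continuous_inr.comp continuous_right
  obtain ⟨k, hk⟩ := exists_subset_pow_of_isCompact hS₁1 hS₁ hS₁gen ((hE.image hπ).inv.union hE)
  refine ⟨2 * k, fun v => ?_⟩
  obtain ⟨_, ⟨c, -, rfl⟩, g, hg, hgv⟩ := exists_mem_pow_map_eq_mul (mapRight ψ)
    (mem_image_of_mem inr (mem_insert 1 K)) (exists_inr_mul_mul_inv_mem_image_mapRight hΛK₁ hTQ)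
    _ _ (mem_pow_wordLength (hS₂gen (inl v)))
  have hv : inl v ∈ ((π '' E)⁻¹ ∪ E) ^ (2 * wordLength S₂ (inl v)) := by
    rw [← inv_inr_right_mul_eq_inl hgv, two_mul, pow_add]
    refine mul_mem_mul (pow_subset_pow_left subset_union_left ?_)
      (pow_subset_pow_left subset_union_right hg)
    rw [inv_pow, inv_mem_inv, ← image_pow]
    exact mem_image_of_mem π hg
  exact (wordLength_le_mul_of_subset_pow hk hv).trans_eq (by ring)

end Cocompact

section ClosedSubgroup

variable {G Γ : Type*} [Group G] [Group Γ] {H : Subgroup G} {ρ : Γ →* G} (hρ : ∀ γ, ρ γ ∈ H)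
  {Λ : Subgroup Γ}
include hρ

theorem discreteTopology_map_codRestrict [TopologicalSpace G] [DiscreteTopology (Λ.map ρ)] :
    DiscreteTopology (Λ.map (ρ.codRestrict H hρ)) := by
  have : ((Λ.map (ρ.codRestrict H hρ) : Subgroup H) : Set H) = Subtype.val ⁻¹' (Λ.map ρ) := by
    ext x
    simp [Subtype.ext_iff]
  show DiscreteTopology ((Λ.map (ρ.codRestrict H hρ) : Subgroup H) : Set H)
  rw [← isDiscrete_iff_discreteTopology, this]
  exact (isDiscrete_iff_discreteTopology.2 ‹_›).preimage continuous_subtype_val.continuousOn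
    Subtype.val_injective

theorem map_codRestrict_mul_preimage_eq_univ {K : Set G} (hKH : K ⊆ H)
    (hΛK : (Λ.map ρ : Set G) * K = H) :
    (Λ.map (ρ.codRestrict H hρ) : Set H) * (Subtype.val ⁻¹' K) = univ := by
  refine eq_univ_of_forall fun h => ?_
  obtain ⟨_, ⟨γ, hγ, rfl⟩, c, hc, hγc⟩ : (h : G) ∈ (Λ.map ρ : Set G) * K := hΛK ▸ h.2
  exact ⟨ρ.codRestrict H hρ γ, Subgroup.mem_map_of_mem _ hγ, ⟨c, hKH hc⟩, hc, Subtype.ext hγc⟩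

end ClosedSubgroup

instance {m n R : Type*} [Finite m] [Finite n] [TopologicalSpace R] [LocallyCompactSpace R] :
    LocallyCompactSpace (Matrix m n R) :=
  inferInstanceAs (LocallyCompactSpace (m → n → R))

theorem continuous_glHom_comp_subtype_apply {n : ℕ} (H : Subgroup (GL (Fin n) ℝ)) :
    Continuous fun p : H × Multiplicative (Fin n → ℝ) => glHom.comp H.subtype p.1 p.2 :=
  continuous_ofAdd.comp <|
    (Units.continuous_val.comp (continuous_subtype_val.comp continuous_fst)).matrix_mulVec
      (continuous_toAdd.comp continuous_snd)

theorem exists_inv_mul_sub_le_and_le_mul_add_of_le_mul {ι : Type*} {a b : ι → ℕ} {k : ℕ}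
    (h₁ : ∀ i, a i ≤ k * b i) (h₂ : ∀ i, b i ≤ k * a i) :
    ∃ C : ℝ, 1 ≤ C ∧ ∀ i, C⁻¹ * b i - C ≤ a i ∧ (a i : ℝ) ≤ C * b i + C := by
  refine ⟨k + 1, le_add_of_nonneg_left (by positivity), fun i => ?_⟩
  have ha : (a i : ℝ) ≤ k * b i := by exact_mod_cast h₁ i
  have hb : (b i : ℝ) ≤ k * a i := by exact_mod_cast h₂ i
  refine ⟨?_, by nlinarith [(a i).cast_nonneg (α := ℝ), (b i).cast_nonneg (α := ℝ)]⟩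
  rw [sub_le_iff_le_add, inv_mul_le_iff₀ (by positivity)]
  nlinarith [(a i).cast_nonneg (α := ℝ), (b i).cast_nonneg (α := ℝ)]

theorem exists_wordLength_inl_le_mul_and_le_mul {n : ℕ} {Γ : Type*} [Group Γ]
    [TopologicalSpace Γ] [DiscreteTopology Γ] {ρ : Γ →* GL (Fin n) ℝ} {H : Subgroup (GL (Fin n) ℝ)}
    (hH : IsClosed (H : Set (GL (Fin n) ℝ))) (hρH : ∀ γ, ρ γ ∈ H) {Λ : Subgroup Γ}
    [DiscreteTopology (Λ.map ρ)] {K : Set (GL (Fin n) ℝ)} (hKH : K ⊆ H) (hK : IsCompact K)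
    (hΛK : (Λ.map ρ : Set (GL (Fin n) ℝ)) * K = H)
    {S₁ : Set (Multiplicative (Fin n → ℝ) ⋊[glHom.comp ρ] Γ)} (hS₁1 : 1 ∈ S₁)
    (hS₁ : IsCompact S₁) (hS₁gen : ∀ g, ∃ m : ℕ, g ∈ S₁ ^ m)
    {S₂ : Set (Multiplicative (Fin n → ℝ) ⋊[glHom.comp H.subtype] H)} (hS₂1 : 1 ∈ S₂)
    (hS₂ : IsCompact S₂) (hS₂gen : ∀ g, ∃ m : ℕ, g ∈ S₂ ^ m) :
    ∃ k : ℕ, ∀ v : Multiplicative (Fin n → ℝ),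
      wordLength S₁ (inl v) ≤ k * wordLength S₂ (inl v) ∧
      wordLength S₂ (inl v) ≤ k * wordLength S₁ (inl v) := by
  have : LocallyCompactSpace H := hH.locallyCompactSpace
  have : DiscreteTopology (Λ.map (ρ.codRestrict H hρH)) := discreteTopology_map_codRestrict hρH
  have hφ := continuous_glHom_comp_subtype_apply H
  have := SemidirectProduct.isTopologicalGroup hφ
  obtain ⟨k₁, hk₁⟩ := exists_wordLength_inl_le_mul_of_cocompact hφ
    (hH.isClosedEmbedding_subtypeVal.isCompact_preimage hK)
    (map_codRestrict_mul_preimage_eq_univ hρH hKH hΛK) hS₁1 hS₁ hS₁gen hS₂ hS₂gen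
  obtain ⟨k₂, hk₂⟩ := exists_wordLength_map_le_mul (mapRight (ρ.codRestrict H hρH))
    (continuous_mapRight _) hS₁ hS₁gen hS₂1 hS₂ hS₂gen
  refine ⟨max k₁ k₂, fun v => ⟨(hk₁ v).trans (Nat.mul_le_mul_right _ (le_max_left _ _)), ?_⟩⟩
  rw [← mapRight_inl (ρ.codRestrict H hρH)]
  exact (hk₂ (inl v)).trans (Nat.mul_le_mul_right _ (le_max_right _ _))

theorem statement8_general (n : ℕ) (Γ : Type*) [Group Γ] [TopologicalSpace Γ]
    [DiscreteTopology Γ] (ρ : Γ →* GL (Fin n) ℝ)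
    -- `Λ` is a finitely generated subgroup of `Γ` such that `ρ(Λ)` is a cocompact lattice
    -- in the closure `H` of `ρ(Γ)`:
    (Λ : Subgroup Γ)
    (hdiscrete : DiscreteTopology (Subgroup.map ρ Λ : Subgroup (GL (Fin n) ℝ)))
    (hcocompact : ∃ K : Set (GL (Fin n) ℝ),
      K ⊆ (ρ.range.topologicalClosure : Subgroup (GL (Fin n) ℝ)) ∧ IsCompact K ∧
      ((Subgroup.map ρ Λ : Subgroup (GL (Fin n) ℝ)) : Set (GL (Fin n) ℝ)) * K =
        ((ρ.range.topologicalClosure : Subgroup (GL (Fin n) ℝ)) : Set (GL (Fin n) ℝ)))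
    -- word lengths on `G₁ = ℝ^n ⋊_ρ Γ` and `G₂ = ℝ^n ⋊ H`:
    (S₁ : Set (Multiplicative (Fin n → ℝ) ⋊[glHom.comp ρ] Γ))
    (hS₁1 : (1 : Multiplicative (Fin n → ℝ) ⋊[glHom.comp ρ] Γ) ∈ S₁)
    (hS₁compact : IsCompact S₁)
    (hS₁gen : ∀ g : Multiplicative (Fin n → ℝ) ⋊[glHom.comp ρ] Γ, ∃ m : ℕ, g ∈ S₁ ^ m)
    (S₂ : Set (Multiplicative (Fin n → ℝ) ⋊[glHom.comp ρ.range.topologicalClosure.subtype]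
      (ρ.range.topologicalClosure : Subgroup (GL (Fin n) ℝ))))
    (hS₂1 : (1 : Multiplicative (Fin n → ℝ) ⋊[glHom.comp ρ.range.topologicalClosure.subtype]
      (ρ.range.topologicalClosure : Subgroup (GL (Fin n) ℝ))) ∈ S₂)
    (hS₂compact : IsCompact S₂)
    (hS₂gen : ∀ g : Multiplicative (Fin n → ℝ) ⋊[glHom.comp ρ.range.topologicalClosure.subtype]
      (ρ.range.topologicalClosure : Subgroup (GL (Fin n) ℝ)), ∃ m : ℕ, g ∈ S₂ ^ m) :
    ∃ C : ℝ, 1 ≤ C ∧ ∀ v : Fin n → ℝ,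
      C⁻¹ * (wordLength S₂ (SemidirectProduct.inl (Multiplicative.ofAdd v)) : ℝ) - C ≤
        (wordLength S₁ (SemidirectProduct.inl (Multiplicative.ofAdd v)) : ℝ) ∧
      (wordLength S₁ (SemidirectProduct.inl (Multiplicative.ofAdd v)) : ℝ) ≤
        C * (wordLength S₂ (SemidirectProduct.inl (Multiplicative.ofAdd v)) : ℝ) + C := by
  obtain ⟨K, hKH, hK, hΛK⟩ := hcocompact
  obtain ⟨k, hk⟩ := exists_wordLength_inl_le_mul_and_le_mul ρ.range.isClosed_topologicalClosure
    (fun γ => ρ.range.le_topologicalClosure ⟨γ, rfl⟩) hKH hK hΛK hS₁1 hS₁compact hS₁gen hS₂1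
    hS₂compact hS₂gen
  exact exists_inv_mul_sub_le_and_le_mul_add_of_le_mul (fun v => (hk (.ofAdd v)).1)
    (fun v => (hk (.ofAdd v)).2)

theorem statement8 (n : ℕ) (hn : 1 ≤ n) (Γ : Type*) [Group Γ] [TopologicalSpace Γ]
    [DiscreteTopology Γ] (hΓ : Group.FG Γ) (ρ : Γ →* GL (Fin n) ℝ)
    -- `Λ` is a finitely generated subgroup of `Γ` such that `ρ(Λ)` is a cocompact lattice
    -- in the closure `H` of `ρ(Γ)`:
    (Λ : Subgroup Γ) (hΛfg : Λ.FG)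
    (hdiscrete : DiscreteTopology (Subgroup.map ρ Λ : Subgroup (GL (Fin n) ℝ)))
    (hcocompact : ∃ K : Set (GL (Fin n) ℝ),
      K ⊆ (ρ.range.topologicalClosure : Subgroup (GL (Fin n) ℝ)) ∧ IsCompact K ∧
      ((Subgroup.map ρ Λ : Subgroup (GL (Fin n) ℝ)) : Set (GL (Fin n) ℝ)) * K =
        ((ρ.range.topologicalClosure : Subgroup (GL (Fin n) ℝ)) : Set (GL (Fin n) ℝ)))
    -- word lengths on `G₁ = ℝ^n ⋊_ρ Γ` and `G₂ = ℝ^n ⋊ H`: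
    (S₁ : Set (Multiplicative (Fin n → ℝ) ⋊[glHom.comp ρ] Γ))
    (hS₁1 : (1 : Multiplicative (Fin n → ℝ) ⋊[glHom.comp ρ] Γ) ∈ S₁)
    (hS₁symm : S₁⁻¹ = S₁) (hS₁compact : IsCompact S₁)
    (hS₁gen : ∀ g : Multiplicative (Fin n → ℝ) ⋊[glHom.comp ρ] Γ, ∃ m : ℕ, g ∈ S₁ ^ m)
    (S₂ : Set (Multiplicative (Fin n → ℝ) ⋊[glHom.comp ρ.range.topologicalClosure.subtype]
      (ρ.range.topologicalClosure : Subgroup (GL (Fin n) ℝ))))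
    (hS₂1 : (1 : Multiplicative (Fin n → ℝ) ⋊[glHom.comp ρ.range.topologicalClosure.subtype]
      (ρ.range.topologicalClosure : Subgroup (GL (Fin n) ℝ))) ∈ S₂)
    (hS₂symm : S₂⁻¹ = S₂) (hS₂compact : IsCompact S₂)
    (hS₂gen : ∀ g : Multiplicative (Fin n → ℝ) ⋊[glHom.comp ρ.range.topologicalClosure.subtype]
      (ρ.range.topologicalClosure : Subgroup (GL (Fin n) ℝ)), ∃ m : ℕ, g ∈ S₂ ^ m) :
    ∃ C : ℝ, 1 ≤ C ∧ ∀ v : Fin n → ℝ,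
      C⁻¹ * (wordLength S₂ (SemidirectProduct.inl (Multiplicative.ofAdd v)) : ℝ) - C ≤
        (wordLength S₁ (SemidirectProduct.inl (Multiplicative.ofAdd v)) : ℝ) ∧
      (wordLength S₁ (SemidirectProduct.inl (Multiplicative.ofAdd v)) : ℝ) ≤
        C * (wordLength S₂ (SemidirectProduct.inl (Multiplicative.ofAdd v)) : ℝ) + C :=
  statement8_general n Γ ρ Λ hdiscrete hcocompact S₁ hS₁1 hS₁compact hS₁gen S₂ hS₂1 hS₂compact
    hS₂gen
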